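/- arXiv:1906.09488 — 3 statements merged into one kernel-verified Lean document; each statement's English description precedes it below -/
import Mathlib

section
/- Let E be a finite-dimensional real vector space, g an inner product on E, and J : E → E a linear map with J ∘ J = −id and g(Jv, Jw) = g(v, w) for all v, w ∈ E. Define the 2-form ω(v,w) := −g(v, Jw). Then: (1) ω is alternating; (2) for all v, w ∈ E one has ω(v,w) ≤ √(g(v,v)·g(w,w) − g(v,w)²); (3) if v, w are g-orthonormal (g(v,v) = g(w,w) = 1, g(v,w) = 0), then ω(v,w) ≤ 1, with equality if and only if w = Jv. -/
open RealInnerProductSpace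

/-- **Wirtinger's inequality.** If `g` is an inner product on a finite-dimensional real
vector space `E` (realized here by an `InnerProductSpace` structure) and `J` is a linear
complex structure which is `g`-isometric, then the 2-form `ω (v, w) := - ⟪v, J w⟫` is
alternating, satisfies `ω (v, w) ≤ |v ∧ w|_g`, and on `g`-orthonormal pairs one has
`ω (v, w) ≤ 1` with equality if and only if `w = J v`. -/
theorem stmt_0 {E : Type*} [NormedAddCommGroup E] [InnerProductSpace ℝ E]
    [FiniteDimensional ℝ E] (J : E →ₗ[ℝ] E)
    (hJ2 : ∀ v : E, J (J v) = -v)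
    (hJiso : ∀ v w : E, ⟪J v, J w⟫ = ⟪v, w⟫)
    (ω : E → E → ℝ) (hω : ∀ v w : E, ω v w = -⟪v, J w⟫) :
    (∀ v w : E, ω v w = -ω w v) ∧
    (∀ v w : E, ω v w ≤ Real.sqrt (⟪v, v⟫ * ⟪w, w⟫ - ⟪v, w⟫ ^ 2)) ∧
    (∀ v w : E, ⟪v, v⟫ = 1 → ⟪w, w⟫ = 1 → ⟪v, w⟫ = 0 →
      ω v w ≤ 1 ∧ (ω v w = 1 ↔ w = J v)) := by
  have hskew : ∀ v w : E, ⟪J v, w⟫ = -⟪v, J w⟫ := by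
    intro v w
    calc ⟪J v, w⟫ = ⟪J (J v), J w⟫ := (hJiso _ _).symm
      _ = ⟪-v, J w⟫ := by rw [hJ2]
      _ = -⟪v, J w⟫ := by rw [inner_neg_left]
  refine ⟨?_, ?_, ?_⟩
  · intro v w
    have h1 := hskew v w
    have h2 : ⟪w, J v⟫ = ⟪J v, w⟫ := real_inner_comm _ _
    rw [hω, hω]
    linarith
  · intro v w
    rw [hω]
    by_cases hv : v = 0
    · simp [hv, Real.sqrt_nonneg]
    · set a : ℝ := ⟪v, v⟫ with ha
      have hapos : 0 < a := by
        rcases lt_or_eq_of_le (real_inner_self_nonneg (x := v)) with h | h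
        · exact h
        · exact absurd (inner_self_eq_zero.mp h.symm) hv
      set c : ℝ := ⟪v, w⟫ / a with hc
      set w' : E := w - c • v with hw'
      have hJvv : ⟪J v, v⟫ = 0 := by
        have h1 := hskew v v
        have h2 : ⟪v, J v⟫ = ⟪J v, v⟫ := real_inner_comm _ _
        linarith
      have h1 : -⟪v, J w⟫ = ⟪J v, w'⟫ := by
        rw [hw', inner_sub_right, real_inner_smul_right, hJvv, hskew]
        ring
      have hnormJv : ‖J v‖ = ‖v‖ := by
        have : ‖J v‖ ^ 2 = ‖v‖ ^ 2 := by
          rw [← real_inner_self_eq_norm_sq, ← real_inner_self_eq_norm_sq, hJiso]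
        have := congrArg Real.sqrt this
        rwa [Real.sqrt_sq (norm_nonneg _), Real.sqrt_sq (norm_nonneg _)] at this
      have hCS : ⟪J v, w'⟫ ≤ ‖J v‖ * ‖w'‖ := real_inner_le_norm _ _
      have hw'w' : a * ⟪w', w'⟫ = a * ⟪w, w⟫ - ⟪v, w⟫ ^ 2 := by
        rw [hw', inner_sub_sub_self, real_inner_smul_left, real_inner_smul_right,
          real_inner_smul_left, real_inner_smul_right, real_inner_comm w v, hc]
        rw [real_inner_comm w v]
        field_simp
        ring
      have hfin : ‖v‖ * ‖w'‖ = Real.sqrt (a * ⟪w, w⟫ - ⟪v, w⟫ ^ 2) := by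
        rw [← hw'w']
        rw [norm_eq_sqrt_real_inner, norm_eq_sqrt_real_inner, ← Real.sqrt_mul
          real_inner_self_nonneg]
      calc -⟪v, J w⟫ = ⟪J v, w'⟫ := h1
        _ ≤ ‖J v‖ * ‖w'‖ := hCS
        _ = Real.sqrt (a * ⟪w, w⟫ - ⟪v, w⟫ ^ 2) := by rw [hnormJv, hfin]
  · intro v w hv hw hvw
    have hJvw : ⟪J v, w⟫ = -⟪v, J w⟫ := hskew v w
    have hwJv : ⟪w, J v⟫ = -⟪v, J w⟫ := by rw [real_inner_comm]; exact hskew v w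
    have key : ⟪J v - w, J v - w⟫ = 2 - 2 * ω v w := by
      have expand : ⟪J v - w, J v - w⟫ = ⟪J v, J v⟫ - ⟪J v, w⟫ - ⟪w, J v⟫ + ⟪w, w⟫ := by
        rw [inner_sub_left, inner_sub_right, inner_sub_right]; ring
      rw [expand, hJiso, hv, hw, hJvw, hwJv, hω]
      ring
    have hnn : (0:ℝ) ≤ ⟪J v - w, J v - w⟫ := real_inner_self_nonneg
    constructor
    · linarith
    · constructor
      · intro h
        have : ⟪J v - w, J v - w⟫ = 0 := by rw [key, h]; ring
        have := inner_self_eq_zero.mp this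
        have : J v = w := by
          have := sub_eq_zero.mp this
          exact this
        exact this.symm
      · intro h
        have : J v - w = 0 := by rw [h]; simp
        have h0 : ⟪J v - w, J v - w⟫ = (0:ℝ) := by rw [this]; simp
        rw [key] at h0
        linarith
end

section
/- Let E be a finite-dimensional real inner product space with inner product ⟨·,·⟩ and let A : E → E be an invertible linear map with adjoint Aᵀ = −A. Then −A² = A Aᵀ is self-adjoint and positive definite; let g := (−A²)^{1/2} be its unique positive self-adjoint square root and set J := g⁻¹ ∘ A. Then: (1) J ∘ J = −id; (2) the bilinear form G(v,w) := ⟨v, g w⟩ is an inner product on E; (3) G(Jv, Jw) = G(v,w) for all v, w; (4) ⟨v, A w⟩ = G(v, J w) for all v, w, so that the 2-form ω(v,w) := −⟨v, Aw⟩ satisfies ω(v,w) = −G(v, Jw). -/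
open RealInnerProductSpace

/-- Polar decomposition of an invertible skew-adjoint map `A` on a finite-dimensional real
inner product space: `-A² = A Aᵀ` is self-adjoint and positive definite; if `g` is its
positive self-adjoint square root (characterized here by `g` self-adjoint, positive definite
and `g ∘ g = -(A ∘ A)`) and `J := g⁻¹ ∘ A` (characterized by `g ∘ J = A`), then
`J ∘ J = -id`, `G(v,w) := ⟪v, g w⟫` is an inner product, `G(Jv, Jw) = G(v, w)` and
`⟪v, A w⟫ = G(v, J w)`, i.e. the 2-form `ω(v,w) = -⟪v, A w⟫` satisfies
`ω(v,w) = -G(v, J w)`. -/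
theorem stmt_2 {E : Type*} [NormedAddCommGroup E] [InnerProductSpace ℝ E]
    [FiniteDimensional ℝ E]
    (A : E →ₗ[ℝ] E) (hAinv : Function.Bijective A)
    (hAskew : LinearMap.adjoint A = -A)
    (g : E →ₗ[ℝ] E) (hg_sa : LinearMap.adjoint g = g)
    (hg_pos : ∀ v : E, v ≠ 0 → 0 < ⟪v, g v⟫)
    (hg_sq : g ∘ₗ g = -(A ∘ₗ A))
    (J : E →ₗ[ℝ] E) (hJ : g ∘ₗ J = A) :
    (LinearMap.adjoint (-(A ∘ₗ A)) = -(A ∘ₗ A) ∧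
      ∀ v : E, v ≠ 0 → 0 < ⟪v, (-(A ∘ₗ A)) v⟫) ∧
    (∀ v : E, J (J v) = -v) ∧
    ((∀ v w : E, ⟪v, g w⟫ = ⟪w, g v⟫) ∧ (∀ v : E, v ≠ 0 → 0 < ⟪v, g v⟫)) ∧
    (∀ v w : E, ⟪J v, g (J w)⟫ = ⟪v, g w⟫) ∧
    (∀ v w : E, ⟪v, A w⟫ = ⟪v, g (J w)⟫) := by
  have hg_sym : g.IsSymmetric := by
    intro x y
    conv_lhs => rw [← hg_sa]
    rw [LinearMap.adjoint_inner_left]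
  have hg_inj : Function.Injective g := by
    intro x y hxy
    by_contra h
    have hne : x - y ≠ 0 := sub_ne_zero.mpr h
    have := hg_pos _ hne
    rw [map_sub, hxy, sub_self, inner_zero_right] at this
    exact lt_irrefl 0 this
  have hgsq : ∀ v, g (g v) = -(A (A v)) := fun v => by
    simpa using congrArg (fun f => f v) hg_sq
  have hgJ : ∀ v, g (J v) = A v := fun v => by
    simpa using congrArg (fun f => f v) hJ
  -- g commutes with A
  have hcomm : ∀ v, g (A v) = A (g v) := by
    have htop : (⨆ μ, Module.End.eigenspace g μ) = ⊤ := by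
      have h := hg_sym.orthogonalComplement_iSup_eigenspaces_eq_bot
      rwa [Submodule.orthogonal_eq_bot_iff] at h
    have hker : ∀ μ : ℝ, Module.End.eigenspace g μ ≤ LinearMap.ker (g ∘ₗ A - A ∘ₗ g) := by
      intro μ v hv
      rw [Module.End.mem_eigenspace_iff] at hv
      rcases eq_or_ne v 0 with rfl | hv0
      · simp
      have hμ : 0 < μ := by
        have h1 := hg_pos v hv0
        rw [hv, real_inner_smul_right, real_inner_self_eq_norm_sq] at h1
        have hn : (0:ℝ) < ‖v‖ * ‖v‖ := by
          have := norm_pos_iff.mpr hv0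
          positivity
        nlinarith
      -- w := g (A v) - μ • A v satisfies g w + μ • w = 0
      set w : E := g (A v) - μ • A v with hw
      have hkey : g w + μ • w = 0 := by
        have h2 : g (g v) = μ ^ 2 • v := by rw [hv, map_smul, hv, smul_smul, sq]
        have h1 : g (g (A v)) = μ ^ 2 • A v := by
          have h3 : -(A (A (A v))) = A (g (g v)) := by rw [hgsq]; simp
          rw [hgsq, h3, h2, map_smul]
        rw [hw]
        simp only [map_sub, map_smul, smul_sub, h1, smul_smul, ← sq]
        abel
      have hw0 : w = 0 := by
        by_contra hwne
        have h2 := hg_pos w hwne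
        have h3 : (0:ℝ) < μ * ‖w‖ ^ 2 := by
          have : (0:ℝ) < ‖w‖ ^ 2 := by
            have := norm_pos_iff.mpr hwne
            positivity
          positivity
        have h4 : ⟪w, g w + μ • w⟫ = 0 := by rw [hkey, inner_zero_right]
        rw [inner_add_right, real_inner_smul_right, real_inner_self_eq_norm_sq] at h4
        nlinarith
      rw [LinearMap.mem_ker]
      have hga : g (A v) = μ • A v := sub_eq_zero.mp (by rw [← hw]; exact hw0)
      simp only [LinearMap.sub_apply, LinearMap.comp_apply, hga, hv, map_smul, sub_self]
    intro v
    have hmem : v ∈ LinearMap.ker (g ∘ₗ A - A ∘ₗ g) := by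
      have hle : (⊤ : Submodule ℝ E) ≤ LinearMap.ker (g ∘ₗ A - A ∘ₗ g) := by
        rw [← htop]; exact iSup_le hker
      exact hle Submodule.mem_top
    rw [LinearMap.mem_ker] at hmem
    simp only [LinearMap.sub_apply, LinearMap.comp_apply, sub_eq_zero] at hmem
    exact hmem
  -- part 2 : J ∘ J = -1
  have hJJ : ∀ v : E, J (J v) = -v := by
    intro v
    apply hg_inj; apply hg_inj
    rw [hgJ, hcomm, hgJ]
    rw [show g (g (-v)) = -(g (g v)) by simp, hgsq]
    simp
  refine ⟨⟨?_, ?_⟩, hJJ, ⟨fun v w => ?_, hg_pos⟩, fun v w => ?_, fun v w => ?_⟩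
  · rw [map_neg, LinearMap.adjoint_comp, hAskew]
    simp
  · intro v hv
    have hAv : A v ≠ 0 := fun h => hv (hAinv.injective (by simpa using h))
    have : ⟪v, A (A v)⟫ = -(‖A v‖ ^ 2) := by
      rw [← LinearMap.adjoint_inner_left, hAskew]
      simp [real_inner_self_eq_norm_sq]
    simp only [LinearMap.neg_apply, LinearMap.comp_apply, inner_neg_right, this, neg_neg]
    have := norm_pos_iff.mpr hAv
    positivity
  · rw [← hg_sym v w, real_inner_comm]
  · rw [hgJ, ← LinearMap.adjoint_inner_left A, hAskew]
    simp only [LinearMap.neg_apply, inner_neg_left]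
    have : A (J v) = -(g v) := by rw [← hgJ, hJJ, map_neg]
    rw [this]
    rw [inner_neg_left, neg_neg, hg_sym]
  · rw [hgJ]
end

section
/- Let E be a finite-dimensional real inner product space with inner product ⟨·,·⟩, let A : E → E be an invertible linear map with Aᵀ = −A, set g := (−A²)^{1/2} (the positive self-adjoint square root of −A²) and J := g⁻¹ ∘ A, and let G(v,w) := ⟨v, g w⟩ and ω(v,w) := −⟨v, A w⟩. Let V ⊆ E be a linear subspace such that ⟨A v, w⟩ = 0 for every v ∈ V and every w ∈ V^⊥ (the Euclidean orthogonal complement). Then A(V) = V, g(V) = V and J(V) = V. Moreover, if dim V = 2 and v ∈ V satisfies G(v,v) = 1, then Jv ∈ V, G(Jv,Jv) = 1, G(v, Jv) = 0, and ω(v, Jv) = 1; in particular ω restricted to V equals the G-area form of V in the basis (v, Jv). -/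
open RealInnerProductSpace

private lemma sqrt_eig {E : Type*} [NormedAddCommGroup E] [InnerProductSpace ℝ E]
    (g : E →ₗ[ℝ] E) (hg_pos : ∀ v : E, v ≠ 0 → 0 < ⟪v, g v⟫)
    {μ : ℝ} (hμ : 0 < μ) {x : E} (hx : g (g x) = (μ * μ) • x) : g x = μ • x := by
  by_contra h
  set y := g x - μ • x with hy
  have hy0 : y ≠ 0 := fun h0 => h (by rwa [hy, sub_eq_zero] at h0)
  have hgy : g y = (-μ) • y := by
    simp only [hy, map_sub, map_smul, hx]
    module
  have h1 : 0 < ⟪y, g y⟫ := hg_pos y hy0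
  rw [hgy, real_inner_smul_right] at h1
  have h2 : 0 < ⟪y, y⟫ := lt_of_le_of_ne real_inner_self_nonneg (Ne.symm (inner_self_ne_zero.2 hy0))
  nlinarith

private lemma map_self_eq {E : Type*} [NormedAddCommGroup E] [InnerProductSpace ℝ E]
    [FiniteDimensional ℝ E] (T : E →ₗ[ℝ] E) (hT : Function.Injective T)
    (V : Submodule ℝ E) (h : ∀ x ∈ V, T x ∈ V) : V.map T = V := by
  have hbij : Function.Bijective T :=
    ⟨hT, (LinearMap.injective_iff_surjective).mp hT⟩
  have hle : V.map T ≤ V := by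
    rintro _ ⟨x, hx, rfl⟩; exact h x hx
  refine Submodule.eq_of_le_of_finrank_le hle ?_
  have : Module.finrank ℝ (V.map (LinearEquiv.ofBijective T hbij : E →ₗ[ℝ] E))
      = Module.finrank ℝ V := LinearEquiv.finrank_map_eq _ _
  exact le_of_eq this.symm

/-- Let `A` be an invertible skew-adjoint map on a finite-dimensional real inner product
space, `g` its positive self-adjoint "square root of `-A²`", `J := g⁻¹ ∘ A` (so `g ∘ J = A`),
`G(v,w) := ⟪v, g w⟫` and `ω(v,w) := -⟪v, A w⟫`. If `V` is a subspace with `⟪A v, w⟫ = 0` for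
all `v ∈ V`, `w ∈ V^⊥`, then `A`, `g`, `J` map `V` onto itself; moreover if `dim V = 2` and
`v ∈ V` has `G(v,v) = 1`, then `J v ∈ V`, `G(Jv,Jv) = 1`, `G(v,Jv) = 0` and `ω(v,Jv) = 1`. -/
theorem stmt_16 {E : Type*} [NormedAddCommGroup E] [InnerProductSpace ℝ E]
    [FiniteDimensional ℝ E]
    (A : E →ₗ[ℝ] E) (hAinv : Function.Bijective A)
    (hAskew : LinearMap.adjoint A = -A)
    (g : E →ₗ[ℝ] E) (hg_sa : LinearMap.adjoint g = g)
    (hg_pos : ∀ v : E, v ≠ 0 → 0 < ⟪v, g v⟫)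
    (hg_sq : g ∘ₗ g = -(A ∘ₗ A))
    (J : E →ₗ[ℝ] E) (hJ : g ∘ₗ J = A)
    (V : Submodule ℝ E)
    (hV : ∀ v ∈ V, ∀ w ∈ Vᗮ, ⟪A v, w⟫ = 0) :
    V.map A = V ∧ V.map g = V ∧ V.map J = V ∧
    (Module.finrank ℝ V = 2 →
      ∀ v ∈ V, ⟪v, g v⟫ = 1 →
        J v ∈ V ∧ ⟪J v, g (J v)⟫ = 1 ∧ ⟪v, g (J v)⟫ = 0 ∧ -⟪v, A (J v)⟫ = 1) := by
  have hgsym : g.IsSymmetric := by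
    intro x y
    conv_lhs => rw [← hg_sa]
    exact LinearMap.adjoint_inner_left g y x
  have hginj : Function.Injective g := by
    rw [← LinearMap.ker_eq_bot]
    rw [Submodule.eq_bot_iff]
    intro x hx
    by_contra hx0
    have := hg_pos x hx0
    rw [LinearMap.mem_ker.mp hx] at this
    simp at this
  -- A maps V into V
  have hAV : ∀ x ∈ V, A x ∈ V := by
    intro x hx
    have : A x ∈ Vᗮᗮ := by
      rw [Submodule.mem_orthogonal]
      intro w hw
      rw [real_inner_comm]
      exact hV x hx w hw
    rwa [Submodule.orthogonal_orthogonal] at this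
  have hgg : ∀ x : E, g (g x) = -(A (A x)) := by
    intro x
    have := congrArg (fun (T : E →ₗ[ℝ] E) => T x) hg_sq
    simpa using this
  -- g maps V into V, via the spectral theorem for g∘g restricted to V
  have hSV : ∀ x ∈ V, (g ∘ₗ g) x ∈ V := by
    intro x hx
    simp only [LinearMap.comp_apply, hgg]
    exact V.neg_mem (hAV _ (hAV _ hx))
  have hSsym : (g ∘ₗ g).IsSymmetric := by
    intro x y
    simp only [LinearMap.comp_apply]
    exact (hgsym _ _).trans (hgsym _ _)
  have hrs : ((g ∘ₗ g).restrict hSV).IsSymmetric := hSsym.restrict_invariant hSV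
  have htopV : (⨆ μ, Module.End.eigenspace ((g ∘ₗ g).restrict hSV) μ) = ⊤ :=
    Submodule.orthogonal_eq_bot_iff.mp hrs.orthogonalComplement_iSup_eigenspaces_eq_bot
  have hgV : ∀ x ∈ V, g x ∈ V := by
    have hle : (⨆ μ, Module.End.eigenspace ((g ∘ₗ g).restrict hSV) μ) ≤
        (V.comap g).comap V.subtype := by
      apply iSup_le
      intro μ u hu
      rw [Module.End.mem_eigenspace_iff] at hu
      have hu' : g (g (u : E)) = μ • (u : E) := by
        have := congrArg (Submodule.subtype V) hu
        simpa [LinearMap.restrict_apply] using this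
      simp only [Submodule.mem_comap, Submodule.subtype_apply]
      by_cases hu0 : (u : E) = 0
      · simp [hu0]
      · have hμpos : 0 < μ := by
          have h1 : 0 < ⟪g (u : E), g (g (u : E))⟫ := by
            refine hg_pos _ fun h0 => hu0 (hginj ?_)
            simpa using h0
          rw [hu'] at h1
          have h2 : ⟪g (u : E), μ • (u : E)⟫ = μ * ⟪(u : E), g (u : E)⟫ := by
            rw [real_inner_smul_right, real_inner_comm]
          rw [h2] at h1
          have h3 : 0 < ⟪(u : E), g (u : E)⟫ := hg_pos _ hu0
          nlinarith
        have hsq : g (g (u : E)) = (Real.sqrt μ * Real.sqrt μ) • (u : E) := by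
          rw [Real.mul_self_sqrt hμpos.le, hu']
        have := sqrt_eig g hg_pos (Real.sqrt_pos.mpr hμpos) hsq
        rw [this]
        exact V.smul_mem _ u.2
    intro x hx
    have : (⟨x, hx⟩ : V) ∈ (V.comap g).comap V.subtype := hle (htopV ▸ Submodule.mem_top)
    simpa using this
  -- g commutes with A, via the spectral theorem for g on E
  have htopE : (⨆ μ, Module.End.eigenspace g μ) = ⊤ :=
    Submodule.orthogonal_eq_bot_iff.mp hgsym.orthogonalComplement_iSup_eigenspaces_eq_bot
  have hAg : ∀ x : E, A (g x) = g (A x) := by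
    have hle : (⨆ μ, Module.End.eigenspace g μ) ≤ LinearMap.eqLocus (A ∘ₗ g) (g ∘ₗ A) := by
      apply iSup_le
      intro μ x hx
      rw [Module.End.mem_eigenspace_iff] at hx
      by_cases hx0 : x = 0
      · simp [LinearMap.mem_eqLocus, hx0]
      · have hμpos : 0 < μ := by
          have h1 : 0 < ⟪x, g x⟫ := hg_pos x hx0
          rw [hx, real_inner_smul_right] at h1
          have h2 : 0 < ⟪x, x⟫ := lt_of_le_of_ne real_inner_self_nonneg (Ne.symm (inner_self_ne_zero.2 hx0))
          nlinarith
        have hcomm : g (g (A x)) = (μ * μ) • A x := by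
          have h1 : g (g (A x)) = A (g (g x)) := by
            rw [hgg, hgg, map_neg]
          rw [h1, hx, map_smul, map_smul, hx, map_smul, smul_smul]
        have := sqrt_eig g hg_pos hμpos hcomm
        simp only [LinearMap.mem_eqLocus, LinearMap.comp_apply]
        rw [hx, map_smul, this]
    intro x
    have : x ∈ LinearMap.eqLocus (A ∘ₗ g) (g ∘ₗ A) := hle (htopE ▸ Submodule.mem_top)
    simpa [LinearMap.mem_eqLocus] using this
  have hgJ : ∀ x : E, g (J x) = A x := by
    intro x
    have := congrArg (fun (T : E →ₗ[ℝ] E) => T x) hJ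
    simpa using this
  -- A ∘ J = -g
  have hAJ : ∀ x : E, A (J x) = -(g x) := by
    intro x
    apply hginj
    rw [map_neg, ← hAg, hgJ, hgg, neg_neg]
  -- J maps V into V
  have hgVeq : V.map g = V := map_self_eq g hginj V hgV
  have hJV : ∀ x ∈ V, J x ∈ V := by
    intro x hx
    have h1 : g (J x) ∈ V.map g := by
      rw [hgVeq, hgJ]
      exact hAV x hx
    obtain ⟨y, hy, hgy⟩ := h1
    rwa [← hginj hgy]
  have hJinj : Function.Injective J := by
    intro a b hab
    apply hAinv.1
    rw [← hgJ, ← hgJ, hab]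
  -- inner product of v with A v vanishes (skewness)
  have hvAv : ∀ v : E, ⟪v, A v⟫ = 0 := by
    intro v
    have h1 : ⟪LinearMap.adjoint A v, v⟫ = ⟪v, A v⟫ := LinearMap.adjoint_inner_left A v v
    rw [hAskew] at h1
    simp only [LinearMap.neg_apply, inner_neg_left] at h1
    rw [real_inner_comm v (A v)] at h1
    linarith
  refine ⟨map_self_eq A hAinv.1 V hAV, hgVeq, map_self_eq J hJinj V hJV, ?_⟩
  intro _ v hv hG1
  refine ⟨hJV v hv, ?_, ?_, ?_⟩
  · -- ⟪J v, g (J v)⟫ = 1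
    rw [hgJ, real_inner_comm]
    have h1 : ⟪v, LinearMap.adjoint A (J v)⟫ = ⟪A v, J v⟫ :=
      LinearMap.adjoint_inner_right A v (J v)
    rw [hAskew] at h1
    simp only [LinearMap.neg_apply, inner_neg_right] at h1
    rw [← h1, hAJ]
    simpa using hG1
  · -- ⟪v, g (J v)⟫ = 0
    rw [hgJ]
    exact hvAv v
  · -- -⟪v, A (J v)⟫ = 1
    rw [hAJ]
    simpa using hG1
end
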